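/- Let X be a finite set of distinct points in ℙ¹ × ℙ¹ over a field k such that no point of X has second coordinate [0:1] (so that y₀ is a non-zero-divisor on S/I_X). Let i, j ∈ ℕ with i ≥ |π₁(X)| − 1, and let F ∈ S be bihomogeneous of degree (i,j). If F ∈ ⟨y₀, L_A⟩ for every A ∈ π₁(X) with α_A ≥ j+1 (where L_A = a₁x₀ − a₀x₁ if A = [a₀:a₁]), then F ∈ ⟨I_X, y₀⟩. -/

import Mathlib

open MvPolynomial
open scoped Classical

noncomputable section

/-- `ℙ¹` over `k`, as the projectivization of `k²`. A `Finset` of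
`P1 k × P1 k` is a finite set of distinct points in `ℙ¹ × ℙ¹`. -/
abbrev P1 (k : Type) [Field k] := Projectivization k (Fin 2 → k)

variable (k : Type) [Field k]

/-- The linear form `a₁x₀ - a₀x₁` of degree `(1,0)` vanishing at `A = [a₀:a₁]`. -/
def lX (A : P1 k) : MvPolynomial (Fin 4) k :=
  C (A.rep 1) * X 0 - C (A.rep 0) * X 1

/-- The linear form `b₁y₀ - b₀y₁` of degree `(0,1)` vanishing at `B = [b₀:b₁]`. -/
def lY (B : P1 k) : MvPolynomial (Fin 4) k :=
  C (B.rep 1) * X 2 - C (B.rep 0) * X 3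

/-- The defining ideal `I_P = ⟨a₁x₀ - a₀x₁, b₁y₀ - b₀y₁⟩` of a point
`P = [a₀:a₁] × [b₀:b₁]` of `ℙ¹ × ℙ¹`. Here `x₀,x₁,y₀,y₁` are `X 0, X 1, X 2, X 3`. -/
def pointIdeal (P : P1 k × P1 k) : Ideal (MvPolynomial (Fin 4) k) :=
  Ideal.span {lX k P.1, lY k P.2}

/-- The defining ideal `I_X = ⋂_{P ∈ X} I_P` of a finite set of points of `ℙ¹ × ℙ¹`. -/
def IX (Xs : Finset (P1 k × P1 k)) : Ideal (MvPolynomial (Fin 4) k) :=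
  ⨅ P ∈ Xs, pointIdeal k P

/-- The irrelevant ideal `B = ⟨x₀y₀, x₀y₁, x₁y₀, x₁y₁⟩`. -/
def Birr : Ideal (MvPolynomial (Fin 4) k) :=
  Ideal.span {X 0 * X 2, X 0 * X 3, X 1 * X 2, X 1 * X 3}

/-- The ideal `⟨x₀, x₁⟩`. -/
def Mx : Ideal (MvPolynomial (Fin 4) k) := Ideal.span {X 0, X 1}

/-- The bidegree-`(i,j)` component `S_{(i,j)}` of `S = k[x₀,x₁,y₀,y₁]`: the `k`-span of
monomials of degree `i` in `x₀,x₁` and degree `j` in `y₀,y₁`. -/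
def bicomp (i j : ℕ) : Submodule k (MvPolynomial (Fin 4) k) :=
  Submodule.span k {f | ∃ m : Fin 4 →₀ ℕ, m 0 + m 1 = i ∧ m 2 + m 3 = j ∧ f = monomial m 1}

/-- The Hilbert function `H_{S/I}(i,j) = dim_k S_{(i,j)} - dim_k (I ∩ S_{(i,j)})`. -/
def hilb (I : Ideal (MvPolynomial (Fin 4) k)) (i j : ℕ) : ℤ :=
  (Module.finrank k (bicomp k i j) : ℤ) -
    (Module.finrank k
      ((Submodule.restrictScalars k I) ⊓ bicomp k i j : Submodule k (MvPolynomial (Fin 4) k)) : ℤ)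

/-- `π₁(X)`, the set of distinct first coordinates of points of `X`. -/
def pi1 (Xs : Finset (P1 k × P1 k)) : Finset (P1 k) := Xs.image Prod.fst

/-- `α_A`, the number of points of `X` whose first coordinate is `A`. -/
def alphaA (Xs : Finset (P1 k × P1 k)) (A : P1 k) : ℕ :=
  (Xs.filter (fun P => P.1 = A)).card

/-- The point `[0:1]` of `ℙ¹`. -/
def pt01 : P1 k := Projectivization.mk k ![0, 1] (by
  intro h
  have := congrFun h 1
  simp at this)


/-!
Send `y₀ ↦ 0, y₁ ↦ 1`. As `F` has bidegree `(i, j)`, `F ≡ y₁ʲ f (mod y₀)` for a binary form `f`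
of degree `i` in `x₀, x₁`, and the hypothesis says that `L_A ∣ f` whenever `α_A > j`. The
linear forms `L_A` are pairwise coprime, so `f` is their product times a form of degree at least
`#{A : α_A ≤ j} - 1`; by Lagrange interpolation `f` is then a combination of the products
`∏_{B ≠ A} L_B` with `α_A ≤ j`, and of `∏_B L_B`. Finally `y₁ʲ ∏_{B ≠ A} L_B` lies in `I_X`
modulo `y₀`: when `α_A ≤ j`, `y₁^{α_A}` is, modulo `y₀`, a unit times the product of the forms
`b₁y₀ - b₀y₁` of the points over `A` (here `b₀ ≠ 0` is used), and that product times
`∏_{B ≠ A} L_B` vanishes on `X`.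
-/

namespace MvPolynomial

variable {σ R : Type*} [CommRing R] {f g h : MvPolynomial σ R} {n t : ℕ}

theorem IsHomogeneous.mem_span_range_X_pow (hf : f.IsHomogeneous n) :
    f ∈ Ideal.span (Set.range X) ^ n :=
  (Ideal.mem_span_pow_iff_exists_isHomogeneous X f).2
    ⟨map C f, hf.map C, by rw [eval_map, eval₂_eta]⟩

attribute [local instance] gradedAlgebra in
theorem IsHomogeneous.mul_homogeneousComponent_sub (hg : g.IsHomogeneous t)
    (hgh : (g * h).IsHomogeneous n) (htn : t ≤ n) :
    g * homogeneousComponent (n - t) h = g * h := by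
  have := DirectSum.coe_decompose_mul_add_of_left_mem (homogeneousSubmodule σ R)
    (j := n - t) (b := h) (show g ∈ homogeneousSubmodule σ R t from hg)
  rw [Nat.add_sub_cancel' htn] at this
  conv_rhs => rw [← homogeneousComponent_eq_self hgh]
  rw [← decomposition.decompose'_apply, ← decomposition.decompose'_apply]
  exact this.symm

theorem monomial_one_fin_four (m : Fin 4 →₀ ℕ) :
    (monomial m 1 : MvPolynomial (Fin 4) R) = X 0 ^ m 0 * X 1 ^ m 1 * X 2 ^ m 2 * X 3 ^ m 3 := by
  rw [monomial_eq, C_1, one_mul, Finsupp.prod_fintype _ _ (by simp), Fin.prod_univ_four]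

end MvPolynomial

theorem Ideal.prod_sup_le_sup_prod {R ι : Type*} [CommSemiring R] (s : Finset ι) (I : ι → Ideal R)
    (J : Ideal R) : ∏ i ∈ s, (I i ⊔ J) ≤ (∏ i ∈ s, I i) ⊔ J := by
  induction s using Finset.induction_on with
  | empty => simp
  | @insert a s ha ih =>
    rw [Finset.prod_insert ha, Finset.prod_insert ha]
    calc (I a ⊔ J) * ∏ i ∈ s, (I i ⊔ J) ≤ (I a ⊔ J) * ((∏ i ∈ s, I i) ⊔ J) :=
          Ideal.mul_mono_right ih
      _ ≤ (I a * ∏ i ∈ s, I i) ⊔ J := by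
        rw [Ideal.sup_mul, Ideal.mul_sup, Ideal.mul_sup]
        exact sup_le (sup_le le_sup_left (le_sup_of_le_right Ideal.mul_le_right))
          (le_sup_of_le_right (sup_le Ideal.mul_le_left Ideal.mul_le_left))

variable {k}

def binForm (A : P1 k) : MvPolynomial (Fin 2) k :=
  C (A.rep 1) * X 0 - C (A.rep 0) * X 1

theorem isHomogeneous_binForm (A : P1 k) : (binForm A).IsHomogeneous 1 :=
  (isHomogeneous_C_mul_X _ 0).sub (isHomogeneous_C_mul_X _ 1)

theorem rep_det_ne_zero {A B : P1 k} (h : A ≠ B) :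
    A.rep 0 * B.rep 1 - A.rep 1 * B.rep 0 ≠ 0 := by
  have hind := (Projectivization.independent_pair_iff_ne A B).2 h
  rw [Projectivization.independent_iff] at hind
  have hunit := (Matrix.linearIndependent_rows_iff_isUnit (A := Matrix.of ![A.rep, B.rep])).1
    (by rwa [show (Matrix.of ![A.rep, B.rep]).row = Projectivization.rep ∘ ![A, B] by
      ext i; fin_cases i <;> rfl])
  rw [Matrix.isUnit_iff_isUnit_det, Matrix.det_fin_two] at hunit
  simpa using hunit.ne_zero

theorem span_range_X_le_span_binForm_pair {A B : P1 k} (h : A ≠ B) :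
    Ideal.span (Set.range X) ≤ Ideal.span {binForm A, binForm B} := by
  rw [Ideal.span_le]
  rintro _ ⟨n, rfl⟩
  have key : C (A.rep 0 * B.rep 1 - A.rep 1 * B.rep 0) * X n
      = C (A.rep n) * binForm B - C (B.rep n) * binForm A := by
    fin_cases n <;> simp [binForm] <;> ring
  rw [SetLike.mem_coe, ← (Ideal.span _).unit_mul_mem_iff_mem
    ((isUnit_iff_ne_zero.2 (rep_det_ne_zero h)).map C), key]
  exact Ideal.sub_mem _ (Ideal.mul_mem_left _ _ (Ideal.subset_span (by simp)))
    (Ideal.mul_mem_left _ _ (Ideal.subset_span (by simp)))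

theorem isRelPrime_binForm {A B : P1 k} (h : A ≠ B) : IsRelPrime (binForm A) (binForm B) := by
  intro d hA hB
  have hX : ∀ n, d ∣ X n := fun n => by
    obtain ⟨a, b, hab⟩ := Ideal.mem_span_pair.1
      (span_range_X_le_span_binForm_pair h (Ideal.subset_span ⟨n, rfl⟩))
    exact hab ▸ dvd_add (dvd_mul_of_dvd_right hA a) (dvd_mul_of_dvd_right hB b)
  have hX01 : IsRelPrime (X 0 : MvPolynomial (Fin 2) k) (X 1) :=
    (X_prime.irreducible.isRelPrime_iff_not_dvd).2 (by rw [X_dvd_X]; decide)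
  exact hX01 (hX 0) (hX 1)

theorem prod_binForm_dvd {V : Finset (P1 k)} {f : MvPolynomial (Fin 2) k}
    (h : ∀ A ∈ V, binForm A ∣ f) : ∏ A ∈ V, binForm A ∣ f :=
  Finset.prod_dvd_of_isRelPrime (fun _ _ _ _ hAB => isRelPrime_binForm hAB) h

theorem span_range_X_pow_le_span_prod_erase {V : Finset (P1 k)} (hV : V.Nonempty) :
    Ideal.span (Set.range X) ^ (V.card - 1) ≤
      Ideal.span ((fun A => ∏ B ∈ V.erase A, binForm B) '' V) := by
  induction V using Finset.induction_on with
  | empty => exact absurd hV Finset.not_nonempty_empty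
  | @insert a s ha ih =>
    rcases s.eq_empty_or_nonempty with rfl | hs
    · simp
    rw [Finset.card_insert_of_notMem ha, Nat.add_sub_cancel,
      ← Nat.sub_add_cancel (Finset.card_pos.2 hs), pow_succ]
    refine (Ideal.mul_mono_left (ih hs)).trans ?_
    rw [Ideal.span_mul_span', Ideal.span_le]
    rintro _ ⟨_, ⟨A, hA, rfl⟩, _, ⟨n, rfl⟩, rfl⟩
    have hAa : A ≠ a := fun he => ha (he ▸ hA)
    obtain ⟨u, v, huv⟩ := Ideal.mem_span_pair.1
      (span_range_X_le_span_binForm_pair hAa (Ideal.subset_span ⟨n, rfl⟩))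
    have hgenA : (∏ B ∈ s.erase A, binForm B) * binForm A
        = ∏ B ∈ (insert a s).erase a, binForm B := by
      rw [Finset.erase_insert ha, Finset.prod_erase_mul _ _ hA]
    have hgena : (∏ B ∈ s.erase A, binForm B) * binForm a
        = ∏ B ∈ (insert a s).erase A, binForm B := by
      rw [Finset.erase_insert_of_ne hAa.symm,
        Finset.prod_insert fun h => ha (Finset.mem_of_mem_erase h), mul_comm]
    change (∏ B ∈ s.erase A, binForm B) * X n ∈ _
    rw [← huv, mul_add, mul_left_comm, mul_left_comm _ v, hgenA, hgena]
    exact Ideal.add_mem _ (Ideal.mul_mem_left _ _ (Ideal.subset_span ⟨a, by simp, rfl⟩))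
      (Ideal.mul_mem_left _ _ (Ideal.subset_span ⟨A, by simp [hA], rfl⟩))

def interpolationIdeal (W U : Finset (P1 k)) : Ideal (MvPolynomial (Fin 2) k) :=
  Ideal.span ((fun A => ∏ B ∈ W.erase A, binForm B) '' U) ⊔
    Ideal.span {∏ B ∈ W, binForm B}

theorem mem_interpolationIdeal_of_dvd {W U : Finset (P1 k)} (hUW : U ⊆ W)
    {f : MvPolynomial (Fin 2) k} {d : ℕ} (hf : f.IsHomogeneous d) (hW : W.card ≤ d + 1)
    (hdvd : ∀ A ∈ W \ U, binForm A ∣ f) : f ∈ interpolationIdeal W U := by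
  obtain ⟨h, rfl⟩ := prod_binForm_dvd hdvd
  rcases U.eq_empty_or_nonempty with rfl | hU
  · rw [Finset.sdiff_empty]
    exact Ideal.mem_sup_right (Ideal.mul_mem_right _ _ (Ideal.mem_span_singleton_self _))
  refine Ideal.mem_sup_left ?_
  have hcard : (W \ U).card + U.card = W.card := Finset.card_sdiff_add_card_eq_card hUW
  have hprod : (∏ B ∈ W \ U, binForm B).IsHomogeneous (W \ U).card := by
    simpa using IsHomogeneous.prod _ _ (fun _ => 1) (fun A _ => isHomogeneous_binForm A)
  rw [← hprod.mul_homogeneousComponent_sub hf (by have := hU.card_pos; omega), mul_comm]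
  have hcofactor := span_range_X_pow_le_span_prod_erase hU <|
    Ideal.pow_le_pow_right (n := d - (W \ U).card)
      (by omega) (homogeneousComponent_isHomogeneous _ h).mem_span_range_X_pow
  refine Ideal.mem_colon_span_singleton.1 ((Ideal.span_le.2 ?_) hcofactor)
  rintro _ ⟨A, hA, rfl⟩
  have hsplit : W.erase A \ U.erase A = W \ U := by
    ext B; by_cases hBA : B = A <;> simp_all
  rw [SetLike.mem_coe, Ideal.mem_colon_span_singleton, mul_comm, ← hsplit,
    Finset.prod_sdiff (Finset.erase_subset_erase A hUW)]
  exact Ideal.subset_span ⟨A, hA, rfl⟩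

def includeX : MvPolynomial (Fin 2) k →ₐ[k] MvPolynomial (Fin 4) k := aeval ![X 0, X 1]

def restrictY01 : MvPolynomial (Fin 4) k →ₐ[k] MvPolynomial (Fin 2) k := aeval ![X 0, X 1, 0, 1]

theorem includeX_binForm (A : P1 k) : includeX (binForm A) = lX k A := by
  simp [includeX, binForm, lX]

theorem binForm_dvd_restrictY01 {A : P1 k} {F : MvPolynomial (Fin 4) k}
    (hF : F ∈ Ideal.span {X 2, lX k A}) : binForm A ∣ restrictY01 F := by
  obtain ⟨u, v, rfl⟩ := Ideal.mem_span_pair.1 hF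
  have hlX : restrictY01 (lX k A) = binForm A := by simp [restrictY01, binForm, lX]
  rw [map_add, map_mul, map_mul, hlX, show restrictY01 (X 2 : MvPolynomial (Fin 4) k) = 0 by
    simp [restrictY01], mul_zero, zero_add]
  exact dvd_mul_left _ _

theorem restrictY01_monomial (m : Fin 4 →₀ ℕ) :
    restrictY01 (monomial m (1 : k)) = X 0 ^ m 0 * X 1 ^ m 1 * 0 ^ m 2 := by
  simp [monomial_one_fin_four, restrictY01]

theorem isHomogeneous_restrictY01 {i j : ℕ} {F : MvPolynomial (Fin 4) k}
    (hF : F ∈ bicomp k i j) :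
    (restrictY01 F).IsHomogeneous i := by
  induction hF using Submodule.span_induction with
  | mem _ hm =>
    obtain ⟨m, hi, -, rfl⟩ := hm
    rw [restrictY01_monomial]
    rcases Nat.eq_zero_or_pos (m 2) with h2 | h2
    · rw [h2, pow_zero, mul_one, ← hi]
      exact (isHomogeneous_X_pow _ _).mul (isHomogeneous_X_pow _ _)
    · rw [zero_pow h2.ne', mul_zero]
      exact isHomogeneous_zero _ _ _
  | zero => simpa using isHomogeneous_zero _ _ _
  | add _ _ _ _ hx hy => simpa using hx.add hy
  | smul c _ _ hx => simpa [smul_eq_C_mul] using hx.C_mul c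

theorem sub_X_three_pow_mul_includeX_restrictY01_mem {i j : ℕ} {F : MvPolynomial (Fin 4) k}
    (hF : F ∈ bicomp k i j) : F - X 3 ^ j * includeX (restrictY01 F) ∈ Ideal.span {X 2} := by
  induction hF using Submodule.span_induction with
  | mem _ hm =>
    obtain ⟨m, -, hj, rfl⟩ := hm
    rw [restrictY01_monomial, monomial_one_fin_four]
    rcases Nat.eq_zero_or_pos (m 2) with h2 | h2
    · rw [← hj, h2, pow_zero, mul_one, zero_add]
      convert (Ideal.span {(X 2 : MvPolynomial (Fin 4) k)}).zero_mem using 1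
      simp [includeX]
      ring
    · rw [zero_pow h2.ne', mul_zero, map_zero includeX, mul_zero, sub_zero]
      exact Ideal.mul_mem_right _ _ (Ideal.mul_mem_left _ _
        (Ideal.pow_mem_of_mem _ (Ideal.mem_span_singleton_self _) _ h2))
  | zero => simp
  | add x y _ _ hx hy =>
    rw [map_add, map_add, mul_add, add_sub_add_comm]
    exact Ideal.add_mem _ hx hy
  | smul c x _ hx =>
    rw [map_smul, map_smul, mul_smul_comm, ← smul_sub]
    exact Submodule.smul_of_tower_mem _ c hx

theorem rep_zero_ne_zero {B : P1 k} (hB : B ≠ pt01 k) : B.rep 0 ≠ 0 := by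
  contrapose! hB
  rw [← B.mk_rep, pt01, Projectivization.mk_eq_mk_iff']
  exact ⟨B.rep 1, by ext i; fin_cases i <;> simp [hB]⟩

theorem X_three_mem_span_lY_sup {B : P1 k} (hB : B ≠ pt01 k) :
    X 3 ∈ Ideal.span {lY k B} ⊔ Ideal.span {X 2} := by
  rw [← Ideal.span_insert, Ideal.mem_span_pair]
  refine ⟨-C (B.rep 0)⁻¹, C (B.rep 1) * C (B.rep 0)⁻¹, ?_⟩
  have hB0 : C (B.rep 0)⁻¹ * C (B.rep 0) = (1 : MvPolynomial (Fin 4) k) := by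
    rw [← C_mul, inv_mul_cancel₀ (rep_zero_ne_zero hB), C_1]
  rw [lY]
  linear_combination (X 3 : MvPolynomial (Fin 4) k) * hB0

theorem X_three_pow_card_mem {E : Finset (P1 k × P1 k)} (hE : ∀ P ∈ E, P.2 ≠ pt01 k) :
    X 3 ^ E.card ∈ Ideal.span {∏ P ∈ E, lY k P.2} ⊔ Ideal.span {X 2} := by
  rw [← Finset.prod_const, ← Ideal.prod_span_singleton]
  exact Ideal.prod_sup_le_sup_prod _ _ _
    (Ideal.prod_mem_prod fun P hP => X_three_mem_span_lY_sup (hE P hP))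

theorem mem_IX_iff {Xs : Finset (P1 k × P1 k)} {G : MvPolynomial (Fin 4) k} :
    G ∈ IX k Xs ↔ ∀ P ∈ Xs, G ∈ pointIdeal k P := by
  simp [IX]

theorem lX_mem_pointIdeal (P : P1 k × P1 k) : lX k P.1 ∈ pointIdeal k P :=
  Ideal.subset_span (by simp)

theorem lY_mem_pointIdeal (P : P1 k × P1 k) : lY k P.2 ∈ pointIdeal k P :=
  Ideal.subset_span (by simp)

theorem prod_lX_mem_IX (Xs : Finset (P1 k × P1 k)) : ∏ A ∈ pi1 k Xs, lX k A ∈ IX k Xs :=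
  mem_IX_iff.2 fun P hP => Ideal.mem_of_dvd _
    (Finset.dvd_prod_of_mem _ (Finset.mem_image_of_mem _ hP)) (lX_mem_pointIdeal P)

theorem prod_erase_lX_mul_prod_lY_mem_IX (Xs : Finset (P1 k × P1 k)) (A : P1 k) :
    (∏ B ∈ (pi1 k Xs).erase A, lX k B) * ∏ P ∈ Xs.filter (fun P => P.1 = A), lY k P.2
      ∈ IX k Xs := by
  refine mem_IX_iff.2 fun P hP => ?_
  by_cases hPA : P.1 = A
  · refine Ideal.mem_of_dvd _ (dvd_mul_of_dvd_right ?_ _) (lY_mem_pointIdeal P)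
    exact Finset.dvd_prod_of_mem (fun P : P1 k × P1 k => lY k P.2)
      (Finset.mem_filter.2 ⟨hP, hPA⟩)
  · refine Ideal.mem_of_dvd _ (dvd_mul_of_dvd_left ?_ _) (lX_mem_pointIdeal P)
    exact Finset.dvd_prod_of_mem _ (Finset.mem_erase.2 ⟨hPA, Finset.mem_image_of_mem _ hP⟩)

theorem X_three_pow_mul_prod_erase_mem {Xs : Finset (P1 k × P1 k)}
    (h01 : ∀ P ∈ Xs, P.2 ≠ pt01 k)
    {A : P1 k} {j : ℕ} (hA : alphaA k Xs A ≤ j) :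
    X 3 ^ j * ∏ B ∈ (pi1 k Xs).erase A, lX k B ∈ IX k Xs ⊔ Ideal.span {X 2} := by
  have hcolon :
      Ideal.span {∏ P ∈ Xs.filter (fun P => P.1 = A), lY k P.2} ⊔ Ideal.span {X 2} ≤
      (IX k Xs ⊔ Ideal.span {X 2}).colon (Ideal.span {∏ B ∈ (pi1 k Xs).erase A, lX k B}) := by
    refine sup_le ?_ ?_ <;> rw [Ideal.span_singleton_le_iff_mem, Ideal.mem_colon_span_singleton]
    · rw [mul_comm]
      exact Ideal.mem_sup_left (prod_erase_lX_mul_prod_lY_mem_IX Xs A)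
    · exact Ideal.mem_sup_right (Ideal.mul_mem_right _ _ (Ideal.mem_span_singleton_self _))
  have hα := Ideal.mem_colon_span_singleton.1
    (hcolon (X_three_pow_card_mem fun P hP => h01 P (Finset.mem_filter.1 hP).1))
  rw [← Nat.sub_add_cancel hA, pow_add, mul_assoc]
  exact Ideal.mul_mem_left _ _ hα

theorem X_three_pow_mul_includeX_mem {Xs : Finset (P1 k × P1 k)}
    (h01 : ∀ P ∈ Xs, P.2 ≠ pt01 k)
    {j : ℕ} {f : MvPolynomial (Fin 2) k}
    (hf : f ∈ interpolationIdeal (pi1 k Xs) ((pi1 k Xs).filter (fun A => alphaA k Xs A ≤ j))) :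
    X 3 ^ j * includeX f ∈ IX k Xs ⊔ Ideal.span {X 2} := by
  have hlift (V : Finset (P1 k)) : includeX (∏ B ∈ V, binForm B) = ∏ B ∈ V, lX k B := by
    simp only [map_prod, includeX_binForm]
  suffices h : interpolationIdeal (pi1 k Xs) ((pi1 k Xs).filter (fun A => alphaA k Xs A ≤ j)) ≤
      ((IX k Xs ⊔ Ideal.span {X 2}).colon
        (Ideal.span {(X 3 ^ j : MvPolynomial (Fin 4) k)})).comap includeX by
    simpa [Ideal.mem_colon_span_singleton, mul_comm] using h hf
  refine sup_le (Ideal.span_le.2 ?_) ?_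
  · rintro _ ⟨A, hA, rfl⟩
    simp only [SetLike.mem_coe, Ideal.mem_comap, Ideal.mem_colon_span_singleton, hlift, mul_comm]
    exact X_three_pow_mul_prod_erase_mem h01 (Finset.mem_filter.1 hA).2
  · rw [Ideal.span_singleton_le_iff_mem, Ideal.mem_comap, Ideal.mem_colon_span_singleton, hlift]
    exact Ideal.mem_sup_left (Ideal.mul_mem_right _ _ (prod_lX_mem_IX Xs))

theorem stmt17_general (Xs : Finset (P1 k × P1 k))
    (h01 : ∀ P ∈ Xs, P.2 ≠ pt01 k) (i j : ℕ) (hi : (pi1 k Xs).card ≤ i + 1)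
    (F : MvPolynomial (Fin 4) k) (hF : F ∈ bicomp k i j)
    (h : ∀ A ∈ pi1 k Xs, j + 1 ≤ alphaA k Xs A → F ∈ Ideal.span {X 2, lX k A}) :
    F ∈ IX k Xs ⊔ Ideal.span {X 2} := by
  have hdvd : ∀ A ∈ pi1 k Xs \ (pi1 k Xs).filter (fun A => alphaA k Xs A ≤ j),
      binForm A ∣ restrictY01 F := fun A hA => by
    simp only [Finset.mem_sdiff, Finset.mem_filter, not_and, not_le] at hA
    exact binForm_dvd_restrictY01 (h A hA.1 (hA.2 hA.1))
  have hlift := X_three_pow_mul_includeX_mem h01 <| mem_interpolationIdeal_of_dvd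
    (Finset.filter_subset _ _) (isHomogeneous_restrictY01 hF) hi hdvd
  simpa using Ideal.add_mem _
    (Ideal.mem_sup_right (sub_X_three_pow_mul_includeX_restrictY01_mem hF)) hlift

/-- suppose no point of `X` has second coordinate `[0:1]`, let
`i ≥ |π₁(X)| − 1`, and let `F` be bihomogeneous of degree `(i,j)`. If `F ∈ ⟨y₀, L_A⟩`
for every `A ∈ π₁(X)` with `α_A ≥ j+1`, then `F ∈ ⟨I_X, y₀⟩`. -/
theorem stmt17 [CharZero k] (Xs : Finset (P1 k × P1 k))
    (h01 : ∀ P ∈ Xs, P.2 ≠ pt01 k) (i j : ℕ) (hi : (pi1 k Xs).card ≤ i + 1)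
    (F : MvPolynomial (Fin 4) k) (hF : F ∈ bicomp k i j)
    (h : ∀ A ∈ pi1 k Xs, j + 1 ≤ alphaA k Xs A → F ∈ Ideal.span {X 2, lX k A}) :
    F ∈ IX k Xs ⊔ Ideal.span {X 2} :=
  stmt17_general Xs h01 i j hi F hF h
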